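/- Suppose (ψ̄, ψσ, ψσ²) is a smooth solution of the IL^(0,1)QG equations on ℝ × [0,W] × ℝ, with all three fields L-periodic in x and the no-normal-flow boundary condition satisfied. Then the zonal momentum M(t) := ∫₀ᵂ ∫₀ᴸ y ξ̄(x,y,t) dx dy is constant in time. -/

import Mathlib

/-- Partial derivative in `x` of a field of `(x, y, t)`. -/
noncomputable def px (f : ℝ → ℝ → ℝ → ℝ) (x y t : ℝ) : ℝ := deriv (fun x' => f x' y t) x

/-- Partial derivative in `y` of a field of `(x, y, t)`. -/
noncomputable def py (f : ℝ → ℝ → ℝ → ℝ) (x y t : ℝ) : ℝ := deriv (fun y' => f x y' t) y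

/-- Partial derivative in `t` of a field of `(x, y, t)`. -/
noncomputable def pt (f : ℝ → ℝ → ℝ → ℝ) (x y t : ℝ) : ℝ := deriv (fun t' => f x y t') t

/-- Second partial derivative in `x`. -/
noncomputable def pxx (f : ℝ → ℝ → ℝ → ℝ) (x y t : ℝ) : ℝ := deriv (fun x' => px f x' y t) x

/-- Second partial derivative in `y`. -/
noncomputable def pyy (f : ℝ → ℝ → ℝ → ℝ) (x y t : ℝ) : ℝ := deriv (fun y' => py f x y' t) y

/-- Jacobian bracket `{a,b} = ∂ₓa ∂_yb − ∂_ya ∂ₓb` of two fields of `(x, y, t)`. -/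
noncomputable def jac (a b : ℝ → ℝ → ℝ → ℝ) (x y t : ℝ) : ℝ :=
  px a x y t * py b x y t - py a x y t * px b x y t

/-- Potential vorticity `ξ̄ = ∇²ψ̄ − R_S⁻²(ψ̄ − ψσ + (2/3)ψσ²) + βy`. -/
noncomputable def xibar (RS β : ℝ) (ψb ψσ ψσ2 : ℝ → ℝ → ℝ → ℝ) (x y t : ℝ) : ℝ :=
  pxx ψb x y t + pyy ψb x y t
    - (RS ^ 2)⁻¹ * (ψb x y t - ψσ x y t + 2 / 3 * ψσ2 x y t) + β * y

/-- A field of `(x, y, t)` is smooth (infinitely differentiable as a function on `ℝ³`). -/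
def Smooth3 (f : ℝ → ℝ → ℝ → ℝ) : Prop :=
  ContDiff ℝ (⊤ : ℕ∞) (fun z : ℝ × ℝ × ℝ => f z.1 z.2.1 z.2.2)

/-- `L`-periodicity in the zonal direction `x`. -/
def PeriodicX (L : ℝ) (f : ℝ → ℝ → ℝ → ℝ) : Prop :=
  ∀ x y t : ℝ, f (x + L) y t = f x y t

/-- The IL⁽⁰'¹⁾QG equations on the channel `ℝ × [0,W] × ℝ`:
`∂ₜξ̄ + {ψ̄, ξ̄ − R_S⁻²(ψσ − (2/3)ψσ²)} = 0`, `∂ₜψσ + {ψ̄, ψσ} = 0`,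
`∂ₜψσ² + {ψ̄, ψσ²} = 0`. -/
def IL01QG (RS β W : ℝ) (ψb ψσ ψσ2 : ℝ → ℝ → ℝ → ℝ) : Prop :=
  ∀ x t : ℝ, ∀ y ∈ Set.Icc (0:ℝ) W,
    pt (xibar RS β ψb ψσ ψσ2) x y t
      + jac ψb (fun x' y' t' => xibar RS β ψb ψσ ψσ2 x' y' t'
          - (RS ^ 2)⁻¹ * (ψσ x' y' t' - 2 / 3 * ψσ2 x' y' t')) x y t = 0 ∧
    pt ψσ x y t + jac ψb ψσ x y t = 0 ∧
    pt ψσ2 x y t + jac ψb ψσ2 x y t = 0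

/-- No-normal-flow boundary condition: `∂ₓψ̄ = 0` on both channel walls. -/
def NoNormalFlow (W : ℝ) (ψb : ℝ → ℝ → ℝ → ℝ) : Prop :=
  ∀ x t : ℝ, px ψb x 0 t = 0 ∧ px ψb x W t = 0

/-!
Differentiating under the integral sign, `M'(t) = ∫∫ y ∂ₜξ̄ = -∫∫ y {ψ̄, q}`, where
`q = ξ̄ − R_S⁻²(ψσ − (2/3)ψσ²) = ∇²ψ̄ − R_S⁻²ψ̄ + βy` involves `ψ̄` alone. For such `q` the
integrand `y {ψ̄, q}` is a divergence `∂ₓF + ∂_yG` of fluxes built from `ψ̄`. The zonal flux `F`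
is periodic, so only the integrals of `G` along the two walls remain. On a wall `ψ̄` is constant
in `x` by the no-normal-flow condition, which makes `G` the `x`-derivative of a periodic
function there, so these integrals vanish as well.
-/

section IntervalIntegral

variable {E : Type*} [NormedAddCommGroup E] [NormedSpace ℝ E]

theorem hasDerivAt_intervalIntegral_of_continuous (F F' : ℝ → ℝ → E) {a b s₀ : ℝ}
    (hF : Continuous (Function.uncurry F)) (hF' : Continuous (Function.uncurry F'))
    (hd : ∀ s x, HasDerivAt (fun s' => F s' x) (F' s x) s) :
    HasDerivAt (fun s => ∫ x in a..b, F s x) (∫ x in a..b, F' s₀ x) s₀ := by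
  obtain ⟨C, hC⟩ := ((isCompact_closedBall s₀ 1).prod isCompact_uIcc).exists_bound_of_continuousOn
    hF'.continuousOn
  have hF_slice : ∀ s, Continuous (F s) := fun s => hF.comp (continuous_const.prodMk continuous_id)
  refine (intervalIntegral.hasDerivAt_integral_of_dominated_loc_of_deriv_le (bound := fun _ => C)
    (Metric.ball_mem_nhds s₀ one_pos) (.of_forall fun s => (hF_slice s).aestronglyMeasurable)
    ((hF_slice s₀).intervalIntegrable a b)
    (hF'.comp (continuous_const.prodMk continuous_id)).aestronglyMeasurable
    (.of_forall fun x hx s hs =>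
      hC (s, x) ⟨Metric.ball_subset_closedBall hs, Set.uIoc_subset_uIcc hx⟩)
    intervalIntegrable_const (.of_forall fun x _ s _ => hd s x)).2

end IntervalIntegral

noncomputable def dirDeriv (v : ℝ × ℝ × ℝ) (f : ℝ → ℝ → ℝ → ℝ) : ℝ → ℝ → ℝ → ℝ :=
  fun x y t => fderiv ℝ (fun z : ℝ × ℝ × ℝ => f z.1 z.2.1 z.2.2) (x, y, t) v

theorem smooth3_y : Smooth3 (fun _ y _ : ℝ => y) := contDiff_snd.fst

namespace Smooth3

variable {f : ℝ → ℝ → ℝ → ℝ} {x y t : ℝ}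

theorem continuous_comp {X : Type*} [TopologicalSpace X] (hf : Smooth3 f) {a b c : X → ℝ}
    (ha : Continuous a) (hb : Continuous b) (hc : Continuous c) :
    Continuous fun p => f (a p) (b p) (c p) :=
  (ContDiff.continuous hf).comp (ha.prodMk (hb.prodMk hc))

theorem continuous_x (hf : Smooth3 f) : Continuous fun x => f x y t :=
  hf.continuous_comp continuous_id continuous_const continuous_const

theorem dirDeriv (hf : Smooth3 f) (v : ℝ × ℝ × ℝ) : Smooth3 (_root_.dirDeriv v f) :=
  (ContDiff.fderiv_right hf (by simp)).clm_apply contDiff_const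

theorem hasDerivAt_comp {γ : ℝ → ℝ × ℝ × ℝ} {v : ℝ × ℝ × ℝ} {s : ℝ} (hf : Smooth3 f)
    (hγ : HasDerivAt γ v s) :
    HasDerivAt (fun s => f (γ s).1 (γ s).2.1 (γ s).2.2)
      (_root_.dirDeriv v f (γ s).1 (γ s).2.1 (γ s).2.2) s :=
  ((ContDiff.differentiable hf (by simp)) (γ s)).hasFDerivAt.comp_hasDerivAt s hγ

theorem px_eq_dirDeriv (hf : Smooth3 f) : px f = _root_.dirDeriv (1, 0, 0) f := by
  funext x y t
  exact (hf.hasDerivAt_comp ((hasDerivAt_id x).prodMk (hasDerivAt_const x (y, t)))).deriv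

theorem py_eq_dirDeriv (hf : Smooth3 f) : py f = _root_.dirDeriv (0, 1, 0) f := by
  funext x y t
  exact (hf.hasDerivAt_comp ((hasDerivAt_const y x).prodMk
    ((hasDerivAt_id y).prodMk (hasDerivAt_const y t)))).deriv

theorem pt_eq_dirDeriv (hf : Smooth3 f) : pt f = _root_.dirDeriv (0, 0, 1) f := by
  funext x y t
  exact (hf.hasDerivAt_comp ((hasDerivAt_const t x).prodMk
    ((hasDerivAt_const t y).prodMk (hasDerivAt_id t)))).deriv

theorem px (hf : Smooth3 f) : Smooth3 (px f) := hf.px_eq_dirDeriv ▸ hf.dirDeriv _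
theorem py (hf : Smooth3 f) : Smooth3 (py f) := hf.py_eq_dirDeriv ▸ hf.dirDeriv _
theorem pt (hf : Smooth3 f) : Smooth3 (pt f) := hf.pt_eq_dirDeriv ▸ hf.dirDeriv _

theorem hasDerivAt_px (hf : Smooth3 f) :
    HasDerivAt (fun x' => f x' y t) (_root_.px f x y t) x := by
  rw [hf.px_eq_dirDeriv]
  exact hf.hasDerivAt_comp ((hasDerivAt_id x).prodMk (hasDerivAt_const x (y, t)))

theorem hasDerivAt_py (hf : Smooth3 f) :
    HasDerivAt (fun y' => f x y' t) (_root_.py f x y t) y := by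
  rw [hf.py_eq_dirDeriv]
  exact hf.hasDerivAt_comp ((hasDerivAt_const y x).prodMk
    ((hasDerivAt_id y).prodMk (hasDerivAt_const y t)))

theorem hasDerivAt_pt (hf : Smooth3 f) :
    HasDerivAt (fun t' => f x y t') (_root_.pt f x y t) t := by
  rw [hf.pt_eq_dirDeriv]
  exact hf.hasDerivAt_comp ((hasDerivAt_const t x).prodMk
    ((hasDerivAt_const t y).prodMk (hasDerivAt_id t)))

theorem dirDeriv_comm (hf : Smooth3 f) (v w : ℝ × ℝ × ℝ) :
    _root_.dirDeriv v (_root_.dirDeriv w f) = _root_.dirDeriv w (_root_.dirDeriv v f) := by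
  set F : ℝ × ℝ × ℝ → ℝ := fun z => f z.1 z.2.1 z.2.2
  have hF : ContDiff ℝ (⊤ : ℕ∞) F := hf
  have hF' : ContDiff ℝ (⊤ : ℕ∞) (fderiv ℝ F) := hF.fderiv_right (by simp)
  have hsnd : ∀ p v w, fderiv ℝ (fun z => fderiv ℝ F z w) p v = fderiv ℝ (fderiv ℝ F) p v w :=
    fun p v w => by
      rw [fderiv_clm_apply (hF'.differentiable (by simp) p) (differentiableAt_const w)]
      simp
  funext x y t
  calc fderiv ℝ (fun z => fderiv ℝ F z w) (x, y, t) v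
      = fderiv ℝ (fderiv ℝ F) (x, y, t) v w := hsnd _ _ _
    _ = fderiv ℝ (fderiv ℝ F) (x, y, t) w v :=
        (hF.contDiffAt.isSymmSndFDerivAt (by simp [← WithTop.coe_ofNat])).eq v w
    _ = fderiv ℝ (fun z => fderiv ℝ F z v) (x, y, t) w := (hsnd _ _ _).symm

theorem px_py_comm (hf : Smooth3 f) : _root_.px (_root_.py f) = _root_.py (_root_.px f) := by
  rw [hf.py_eq_dirDeriv, (hf.dirDeriv _).px_eq_dirDeriv, hf.px_eq_dirDeriv,
    (hf.dirDeriv _).py_eq_dirDeriv, hf.dirDeriv_comm]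

end Smooth3

namespace PeriodicX

variable {L : ℝ} {f : ℝ → ℝ → ℝ → ℝ}

theorem px (h : PeriodicX L f) : PeriodicX L (px f) := by
  intro x y t
  rw [_root_.px, _root_.px, ← deriv_comp_add_const]
  exact congrArg₂ deriv (funext fun x' => h x' y t) rfl

theorem py (h : PeriodicX L f) : PeriodicX L (py f) := by
  intro x y t
  exact congrArg₂ deriv (funext fun y' => h x y' t) rfl

theorem integral_px_eq_zero (h : PeriodicX L f) (hf : Smooth3 f) (y t : ℝ) :
    ∫ x in (0 : ℝ)..L, _root_.px f x y t = 0 := by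
  rw [intervalIntegral.integral_eq_sub_of_hasDerivAt (fun x _ => hf.hasDerivAt_px)
    (hf.px.continuous_x.intervalIntegrable 0 L), ← zero_add L, h, sub_self]

end PeriodicX

namespace Smooth3

variable {f : ℝ → ℝ → ℝ → ℝ}

theorem hasDerivAt_integral_py (hf : Smooth3 f) (a b y t : ℝ) :
    HasDerivAt (fun y => ∫ x in a..b, f x y t) (∫ x in a..b, _root_.py f x y t) y :=
  hasDerivAt_intervalIntegral_of_continuous (fun y x => f x y t) (fun y x => _root_.py f x y t)
    (hf.continuous_comp continuous_snd continuous_fst continuous_const)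
    (hf.py.continuous_comp continuous_snd continuous_fst continuous_const)
    fun _ _ => hf.hasDerivAt_py

theorem hasDerivAt_integral_integral_pt (hf : Smooth3 f) (a b c d t : ℝ) :
    HasDerivAt (fun t => ∫ y in c..d, ∫ x in a..b, f x y t)
      (∫ y in c..d, ∫ x in a..b, _root_.pt f x y t) t := by
  have hcont : ∀ {g : ℝ → ℝ → ℝ → ℝ}, Smooth3 g →
      Continuous fun p : ℝ × ℝ => ∫ x in a..b, g x p.2 p.1 := fun {g} hg =>
    intervalIntegral.continuous_parametric_intervalIntegral_of_continuous'
      (f := fun (p : ℝ × ℝ) x => g x p.2 p.1)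
      (hg.continuous_comp continuous_snd continuous_fst.snd continuous_fst.fst) a b
  refine hasDerivAt_intervalIntegral_of_continuous (fun t y => ∫ x in a..b, f x y t)
    (fun t y => ∫ x in a..b, _root_.pt f x y t) (hcont hf) (hcont hf.pt) fun s y => ?_
  exact hasDerivAt_intervalIntegral_of_continuous (fun t x => f x y t)
    (fun t x => _root_.pt f x y t)
    (hf.continuous_comp continuous_snd continuous_const continuous_fst)
    (hf.pt.continuous_comp continuous_snd continuous_const continuous_fst)
    fun _ _ => hf.hasDerivAt_pt

end Smooth3

theorem integral_integral_px_add_py {L : ℝ} {F G : ℝ → ℝ → ℝ → ℝ} (hF : Smooth3 F)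
    (hG : Smooth3 G) (hper : PeriodicX L F) (c d t : ℝ) :
    ∫ y in c..d, ∫ x in (0 : ℝ)..L, (px F x y t + py G x y t)
      = (∫ x in (0 : ℝ)..L, G x d t) - ∫ x in (0 : ℝ)..L, G x c t := by
  have hzonal : ∀ y, ∫ x in (0 : ℝ)..L, (px F x y t + py G x y t)
      = ∫ x in (0 : ℝ)..L, py G x y t := fun y => by
    rw [intervalIntegral.integral_add (hF.px.continuous_x.intervalIntegrable 0 L)
      (hG.py.continuous_x.intervalIntegrable 0 L), hper.integral_px_eq_zero hF, zero_add]
  simp only [hzonal]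
  exact intervalIntegral.integral_eq_sub_of_hasDerivAt
    (fun y _ => hG.hasDerivAt_integral_py 0 L y t)
    ((intervalIntegral.continuous_parametric_intervalIntegral_of_continuous'
      (f := fun y x => py G x y t)
      (hG.py.continuous_comp continuous_snd continuous_fst continuous_const) 0 L).intervalIntegrable
      c d)

/-- The potential vorticity advected in the first IL⁽⁰'¹⁾QG equation: with `r = R_S⁻²`,
`ξ̄ − R_S⁻²(ψσ − (2/3)ψσ²) = pv r β ψ̄`, in which `ψσ` and `ψσ²` cancel. -/
noncomputable def pv (r β : ℝ) (u : ℝ → ℝ → ℝ → ℝ) : ℝ → ℝ → ℝ → ℝ :=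
  fun x y t => pxx u x y t + pyy u x y t - r * u x y t + β * y

/- Since `{u, q} = ∂ₓ(u ∂_y q) − ∂_y(u ∂ₓ q)`, we get
`y {u, q} = ∂ₓ(y u ∂_y q) − ∂_y(y u ∂ₓ q) + u ∂ₓ q`, and for `q = pv r β u` the last term is
again a divergence:
`u ∂ₓ q = ∂ₓ(u ∂ₓ²u − ((∂ₓu)² + (∂_yu)² + r u²)/2) + ∂_y(u ∂ₓ∂_y u)`. -/
noncomputable def zonalFlux (r β : ℝ) (u : ℝ → ℝ → ℝ → ℝ) : ℝ → ℝ → ℝ → ℝ :=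
  fun x y t => y * u x y t * py (pv r β u) x y t + u x y t * pxx u x y t
    - (px u x y t ^ 2 + py u x y t ^ 2 + r * u x y t ^ 2) / 2

noncomputable def meridionalFlux (r β : ℝ) (u : ℝ → ℝ → ℝ → ℝ) : ℝ → ℝ → ℝ → ℝ :=
  fun x y t => u x y t * (px (py u) x y t - y * px (pv r β u) x y t)

section Fluxes

variable {L r β : ℝ} {u : ℝ → ℝ → ℝ → ℝ}

namespace Smooth3

theorem pv (hu : Smooth3 u) : Smooth3 (pv r β u) :=
  ((hu.px.px.add hu.py.py).sub (contDiff_const.mul hu)).add (contDiff_const.mul smooth3_y)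

theorem zonalFlux (hu : Smooth3 u) : Smooth3 (zonalFlux r β u) :=
  (((smooth3_y.mul hu).mul hu.pv.py).add (hu.mul hu.px.px)).sub
    ((((hu.px.pow 2).add (hu.py.pow 2)).add (contDiff_const.mul (hu.pow 2))).div_const 2)

theorem meridionalFlux (hu : Smooth3 u) : Smooth3 (meridionalFlux r β u) :=
  hu.mul (hu.py.px.sub (smooth3_y.mul hu.pv.px))

end Smooth3

namespace PeriodicX

theorem pv (h : PeriodicX L u) : PeriodicX L (pv r β u) := fun x y t => by
  have hxx : PeriodicX L (pxx u) := h.px.px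
  have hyy : PeriodicX L (pyy u) := h.py.py
  simp only [_root_.pv, hxx x y t, hyy x y t, h x y t]

theorem zonalFlux (h : PeriodicX L u) : PeriodicX L (zonalFlux r β u) := fun x y t => by
  have hxx : PeriodicX L (pxx u) := h.px.px
  simp only [_root_.zonalFlux, hxx x y t, h x y t, h.px x y t, h.py x y t, h.pv.py x y t]

end PeriodicX

theorem px_zonalFlux_add_py_meridionalFlux (hu : Smooth3 u) (r β x y t : ℝ) :
    px (zonalFlux r β u) x y t + py (meridionalFlux r β u) x y t
      = y * jac u (pv r β u) x y t := by
  have hq : Smooth3 (pv r β u) := hu.pv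
  have hF : px (zonalFlux r β u) x y t = _ := HasDerivAt.deriv <|
    (((hu.hasDerivAt_px.const_mul y).mul hq.py.hasDerivAt_px).add
      (hu.hasDerivAt_px.mul hu.px.px.hasDerivAt_px)).sub
    ((((hu.px.hasDerivAt_px.pow 2).add (hu.py.hasDerivAt_px.pow 2)).add
      ((hu.hasDerivAt_px.pow 2).const_mul r)).div_const 2)
  have hG : py (meridionalFlux r β u) x y t = _ := HasDerivAt.deriv <|
    hu.hasDerivAt_py.mul
      (hu.py.px.hasDerivAt_py.sub ((hasDerivAt_id' y).mul hq.px.hasDerivAt_py))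
  have hq_x : px (pv r β u) x y t = _ := HasDerivAt.deriv <|
    ((hu.px.px.hasDerivAt_px.add hu.py.py.hasDerivAt_px).sub
      (hu.hasDerivAt_px.const_mul r)).add_const (β * y)
  rw [hF, hG, jac, hq.px_py_comm, ← hu.py.px_py_comm, hq_x]
  ring

theorem integral_meridionalFlux_eq_zero (hu : Smooth3 u) (hper : PeriodicX L u) {y t : ℝ}
    (hwall : ∀ x, px u x y t = 0) : ∫ x in (0 : ℝ)..L, meridionalFlux r β u x y t = 0 := by
  obtain ⟨c, hc⟩ : ∃ c, ∀ x, u x y t = c :=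
    ⟨u 0 y t, fun x => is_const_of_deriv_eq_zero (fun x => hu.hasDerivAt_px.differentiableAt)
      hwall x 0⟩
  have hG : ∀ x, HasDerivAt (fun x => c * (py u x y t - y * pv r β u x y t))
      (meridionalFlux r β u x y t) x := fun x => by
    simp only [meridionalFlux, hc]
    exact (hu.py.hasDerivAt_px.sub (hu.pv.hasDerivAt_px.const_mul y)).const_mul c
  rw [intervalIntegral.integral_eq_sub_of_hasDerivAt (fun x _ => hG x)
    (hu.meridionalFlux.continuous_x.intervalIntegrable 0 L), ← zero_add L, hper.py, hper.pv,
    sub_self]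

theorem Smooth3.xibar {RS : ℝ} {ψσ ψσ2 : ℝ → ℝ → ℝ → ℝ} (hu : Smooth3 u) (hψσ : Smooth3 ψσ)
    (hψσ2 : Smooth3 ψσ2) : Smooth3 (xibar RS β u ψσ ψσ2) :=
  ((hu.px.px.add hu.py.py).sub
    (contDiff_const.mul ((hu.sub hψσ).add (contDiff_const.mul hψσ2)))).add
    (contDiff_const.mul smooth3_y)

theorem IL01QG.pt_xibar {RS W : ℝ} {ψσ ψσ2 : ℝ → ℝ → ℝ → ℝ} (h : IL01QG RS β W u ψσ ψσ2)
    (x t : ℝ) {y : ℝ} (hy : y ∈ Set.Icc 0 W) :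
    pt (xibar RS β u ψσ ψσ2) x y t = -jac u (pv (RS ^ 2)⁻¹ β u) x y t := by
  have hq : (fun x' y' t' => xibar RS β u ψσ ψσ2 x' y' t'
      - (RS ^ 2)⁻¹ * (ψσ x' y' t' - 2 / 3 * ψσ2 x' y' t')) = pv (RS ^ 2)⁻¹ β u := by
    funext x y t
    simp only [xibar, pv]
    ring
  have hξ := (h x t y hy).1
  rw [hq] at hξ
  linarith

end Fluxes

theorem zonal_momentum_conserved_general
    (L W β RS : ℝ) (hW : 0 < W)
    (ψb ψσ ψσ2 : ℝ → ℝ → ℝ → ℝ)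
    (hψb : Smooth3 ψb) (hψσ : Smooth3 ψσ) (hψσ2 : Smooth3 ψσ2)
    (hperb : PeriodicX L ψb)
    (heqs : IL01QG RS β W ψb ψσ ψσ2)
    (hbc : NoNormalFlow W ψb) :
    ∀ t₁ t₂ : ℝ,
      (∫ y in (0:ℝ)..W, ∫ x in (0:ℝ)..L, y * xibar RS β ψb ψσ ψσ2 x y t₁)
        = ∫ y in (0:ℝ)..W, ∫ x in (0:ℝ)..L, y * xibar RS β ψb ψσ ψσ2 x y t₂ := by
  have hξ := hψb.xibar (RS := RS) (β := β) hψσ hψσ2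
  have hmomentum : Smooth3 fun x y t => y * xibar RS β ψb ψσ ψσ2 x y t := smooth3_y.mul hξ
  have hpt : ∀ x y t, pt (fun x y t => y * xibar RS β ψb ψσ ψσ2 x y t) x y t
      = y * pt (xibar RS β ψb ψσ ψσ2) x y t := fun x y t => (hξ.hasDerivAt_pt.const_mul y).deriv
  have hdiv : ∀ t, ∫ y in (0:ℝ)..W, ∫ x in (0:ℝ)..L, y * pt (xibar RS β ψb ψσ ψσ2) x y t
      = -∫ y in (0:ℝ)..W, ∫ x in (0:ℝ)..L, (px (zonalFlux (RS ^ 2)⁻¹ β ψb) x y t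
          + py (meridionalFlux (RS ^ 2)⁻¹ β ψb) x y t) := fun t => by
    simp only [← intervalIntegral.integral_neg]
    refine intervalIntegral.integral_congr fun y hy =>
      intervalIntegral.integral_congr fun x _ => ?_
    rw [Set.uIcc_of_le hW.le] at hy
    simp only [heqs.pt_xibar x t hy, px_zonalFlux_add_py_meridionalFlux hψb]
    ring
  have hM : ∀ t, HasDerivAt
      (fun t => ∫ y in (0:ℝ)..W, ∫ x in (0:ℝ)..L, y * xibar RS β ψb ψσ ψσ2 x y t) 0 t := by
    intro t
    convert hmomentum.hasDerivAt_integral_integral_pt 0 L 0 W t using 1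
    simp only [hpt]
    rw [hdiv, integral_integral_px_add_py hψb.zonalFlux hψb.meridionalFlux hperb.zonalFlux,
      integral_meridionalFlux_eq_zero hψb hperb fun x => (hbc x t).1,
      integral_meridionalFlux_eq_zero hψb hperb fun x => (hbc x t).2]
    simp
  exact fun t₁ t₂ => is_const_of_deriv_eq_zero (fun t => (hM t).differentiableAt)
    (fun t => (hM t).deriv) t₁ t₂

/-- Conservation of the zonal momentum `M = ∫∫ y ξ̄` along smooth `x`-periodic
solutions of the IL⁽⁰'¹⁾QG equations with the no-normal-flow boundary condition. -/
theorem zonal_momentum_conserved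
    (L W β RS : ℝ) (hL : 0 < L) (hW : 0 < W) (hRS : 0 < RS)
    (ψb ψσ ψσ2 : ℝ → ℝ → ℝ → ℝ)
    (hψb : Smooth3 ψb) (hψσ : Smooth3 ψσ) (hψσ2 : Smooth3 ψσ2)
    (hperb : PeriodicX L ψb) (hperσ : PeriodicX L ψσ) (hperσ2 : PeriodicX L ψσ2)
    (heqs : IL01QG RS β W ψb ψσ ψσ2)
    (hbc : NoNormalFlow W ψb) :
    ∀ t₁ t₂ : ℝ,
      (∫ y in (0:ℝ)..W, ∫ x in (0:ℝ)..L, y * xibar RS β ψb ψσ ψσ2 x y t₁)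
        = ∫ y in (0:ℝ)..W, ∫ x in (0:ℝ)..L, y * xibar RS β ψb ψσ ψσ2 x y t₂ :=
  zonal_momentum_conserved_general L W β RS hW ψb ψσ ψσ2 hψb hψσ hψσ2 hperb heqs hbc
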